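/- Let G be a group, F an automorphism of G, x a fixed point of F, and g, h ∈ G with z := g⁻¹F(g) and w := h⁻¹F(h) both in the centralizer C of x. Then gxg⁻¹ and hxh⁻¹ are conjugate by an element of the fixed-point subgroup G^F if and only if z and w lie in the same F-twisted conjugacy class of C, i.e. there exists u ∈ C with w = u·z·F(u)⁻¹. -/
import Mathlib


/-- Remark 2.5 (h): `gxg⁻¹` and `hxh⁻¹` are conjugate under the fixed-point subgroup `G^F`
iff `z = g⁻¹F(g)` and `w = h⁻¹F(h)` lie in the same `F`-twisted conjugacy class of the
centralizer of `x`. -/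
theorem conj_in_fixed_subgroup_iff_twisted {G : Type*} [Group G] (F : G ≃* G)
    (x : G) (hx : F x = x) (g h z w : G)
    (hzdef : z = g⁻¹ * F g) (hwdef : w = h⁻¹ * F h)
    (hz : z ∈ Subgroup.centralizer {x}) (hw : w ∈ Subgroup.centralizer {x}) :
    (∃ k : G, F k = k ∧ k * (g * x * g⁻¹) * k⁻¹ = h * x * h⁻¹)
      ↔ ∃ u ∈ Subgroup.centralizer {x}, u * z * (F u)⁻¹ = w := by
  have hFg : F g = g * z := by rw [hzdef]; group
  have hFh : F h = h * w := by rw [hwdef]; group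
  constructor
  · rintro ⟨k, hk, hconj⟩
    refine ⟨h⁻¹ * k * g, ?_, ?_⟩
    · rw [Subgroup.mem_centralizer_singleton_iff]
      have : (h⁻¹ * k * g) * x * (h⁻¹ * k * g)⁻¹ = x := by
        have : h⁻¹ * (k * (g * x * g⁻¹) * k⁻¹) * h = x := by rw [hconj]; group
        calc (h⁻¹ * k * g) * x * (h⁻¹ * k * g)⁻¹
            = h⁻¹ * (k * (g * x * g⁻¹) * k⁻¹) * h := by group
          _ = x := this
      calc h⁻¹ * k * g * x = ((h⁻¹ * k * g) * x * (h⁻¹ * k * g)⁻¹) * (h⁻¹ * k * g) := by group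
        _ = x * (h⁻¹ * k * g) := by rw [this]
    · simp only [map_mul, map_inv, hFg, hFh, hk]
      group
  · rintro ⟨u, hu, huz⟩
    refine ⟨h * u * g⁻¹, ?_, ?_⟩
    · simp only [map_mul, map_inv, hFg, hFh]
      rw [← huz]; group
    · rw [Subgroup.mem_centralizer_singleton_iff] at hu
      calc h * u * g⁻¹ * (g * x * g⁻¹) * (h * u * g⁻¹)⁻¹
          = h * (u * x) * u⁻¹ * h⁻¹ := by group
        _ = h * x * h⁻¹ := by rw [hu]; group
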